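/- Let p be a prime with p > 3, let r ≥ 1 and q = p^r, and let n ≥ 2. Let k be an algebraically closed field of characteristic p and let φ : 𝔽_q → k be a ring homomorphism. Then the first group cohomology H^1(Sp_{2n}(𝔽_q), k^{2n}) of the finite symplectic group Sp_{2n}(𝔽_q) with coefficients in the natural module k^{2n} (action induced by φ) is zero. -/

import Mathlib

open Matrix

/-- The natural representation of the finite symplectic group `Sp_{2n}(𝔽_q)` on `k^{2n}`
(coordinates indexed by `Fin n ⊕ Fin n`), acting by applying `φ` entrywise and then by
matrix–vector multiplication. -/
noncomputable def natRepSp (p r n : ℕ) [Fact p.Prime] (k : Type) [Field k]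
    (φ : GaloisField p r →+* k) :
    Representation k (Matrix.symplecticGroup (Fin n) (GaloisField p r))
      ((Fin n ⊕ Fin n) → k) where
  toFun M := ((M : Matrix (Fin n ⊕ Fin n) (Fin n ⊕ Fin n) (GaloisField p r)).map φ).mulVecLin
  map_one' := by
    simp only [Submonoid.coe_one, Matrix.map_one φ (map_zero φ) (_root_.map_one φ),
      Matrix.mulVecLin_one]
    rfl
  map_mul' A B := by
    simp only [Submonoid.coe_mul, Matrix.map_mul, Matrix.mulVecLin_mul,
      Module.End.mul_eq_comp]

/-! The central element `-1` of `Sp_{2n}(𝔽_q)` acts on `k^{2n}` by the scalar `-1`. For a central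
element `z` acting by a scalar `c`, the cocycle identity evaluated at `zg = gz` gives
`(c - 1) f(g) = g f(z) - f(z)`, so every 1-cocycle is the coboundary of `(c - 1)⁻¹ f(z)` as soon
as `c - 1` is invertible. Here `c - 1 = -2`, a unit because `p` is odd. -/

universe u

namespace groupCohomology

variable {k G : Type u} [CommRing k] [Group G] {A : Rep k G} {z : G} {c : k}

theorem smul_cocycles₁_apply_of_central_smul (hz : z ∈ Subgroup.center G)
    (hρ : ∀ v, A.ρ z v = c • v) (f : cocycles₁ A) (g : G) :
    (c - 1) • f g = A.ρ g (f z) - f z := by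
  have hzg := (mem_cocycles₁_iff f).1 f.2 z g
  have hgz := (mem_cocycles₁_iff f).1 f.2 g z
  rw [Subgroup.mem_center_iff.1 hz g, hzg, hρ] at hgz
  rw [sub_smul, one_smul]
  linear_combination (norm := module) hgz

theorem mem_coboundaries₁_of_central_smul (hz : z ∈ Subgroup.center G)
    (hρ : ∀ v, A.ρ z v = c • v) (hc : IsUnit (c - 1)) (f : cocycles₁ A) :
    ⇑f ∈ coboundaries₁ A := by
  obtain ⟨u, hu⟩ := hc
  refine ⟨(↑u⁻¹ : k) • f z, funext fun g => ?_⟩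
  rw [d₀₁_hom_apply, map_smul, ← smul_sub, ← smul_cocycles₁_apply_of_central_smul hz hρ, ← hu,
    smul_smul, Units.inv_mul, one_smul]

theorem subsingleton_H1_of_central_smul (hz : z ∈ Subgroup.center G)
    (hρ : ∀ v, A.ρ z v = c • v) (hc : IsUnit (c - 1)) : Subsingleton (H1 A) := by
  have hπ : ∀ f : cocycles₁ A, H1π A f = 0 := fun f =>
    (H1π_eq_zero_iff f).2 (mem_coboundaries₁_of_central_smul hz hρ hc f)
  refine ⟨fun a b => ?_⟩
  induction a using H1_induction_on with | h f => ?_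
  induction b using H1_induction_on with | h f' => ?_
  rw [hπ, hπ]

end groupCohomology

theorem natRepSp_neg_one_apply (p r n : ℕ) [Fact p.Prime] (k : Type) [Field k]
    (φ : GaloisField p r →+* k) (v : (Fin n ⊕ Fin n) → k) :
    natRepSp p r n k φ ⟨-1, SymplecticGroup.neg_mem (one_mem _)⟩ v = -v := by
  change ((-1 : Matrix (Fin n ⊕ Fin n) (Fin n ⊕ Fin n) (GaloisField p r)).map φ).mulVec v = -v
  simp only [map_neg, implies_true, Matrix.map_neg, map_zero, map_one, Matrix.map_one,
    neg_mulVec, one_mulVec]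

theorem H1_Sp_natural_eq_zero_general (p r n : ℕ) [Fact p.Prime]
    (hp : 3 < p)
    (k : Type) [Field k] [CharP k p] (φ : GaloisField p r →+* k) :
    Subsingleton (groupCohomology (Rep.of (natRepSp p r n k φ)) 1) := by
  let z : symplecticGroup (Fin n) (GaloisField p r) :=
    ⟨-1, SymplecticGroup.neg_mem (one_mem _)⟩
  have hz : z ∈ Subgroup.center _ :=
    Subgroup.mem_center_iff.2 fun g => Subtype.ext ((mul_neg_one _).trans (neg_one_mul _).symm)
  have hρ (v) : (Rep.of (natRepSp p r n k φ)).ρ z v = (-1 : k) • v :=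
    (natRepSp_neg_one_apply p r n k φ v).trans (neg_one_smul k v).symm
  have h2 : (2 : k) ≠ 0 := Ring.two_ne_zero (by rw [ringChar.eq k p]; omega)
  have hc : IsUnit (-1 - 1 : k) := (by norm_num [h2] : (-1 - 1 : k) ≠ 0).isUnit
  exact groupCohomology.subsingleton_H1_of_central_smul hz hρ hc

/-- **Vanishing of `H¹` for `Sp_{2n}(𝔽_q)` with coefficients in the natural module
(type `Cₙ`, minuscule weight `ω₁`; the 1975 Cline–Parshall–Scott result).**
Let `p > 3` be a prime, `q = p ^ r` with `r ≥ 1`, let `n ≥ 2`, and let `k` be an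
algebraically closed field of characteristic `p`.  Then `H¹(Sp_{2n}(𝔽_q), k^{2n}) = 0`,
where the action is induced by a ring homomorphism `φ : 𝔽_q → k`. -/
theorem H1_Sp_natural_eq_zero (p r n : ℕ) [Fact p.Prime]
    (hp : 3 < p) (hr : 1 ≤ r) (hn : 2 ≤ n)
    (k : Type) [Field k] [IsAlgClosed k] [CharP k p] (φ : GaloisField p r →+* k) :
    Subsingleton (groupCohomology (Rep.of (natRepSp p r n k φ)) 1) :=
  H1_Sp_natural_eq_zero_general p r n hp k φ
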